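/- arXiv:2410.13432 — 4 statements merged into one kernel-verified Lean document; each statement's English description precedes it below -/
import Mathlib

section
/- Let 0 ≤ s < r < t. There exists a constant C > 0, depending only on s, r and t, such that for every bounded function g : ℝ → ℝ and every δ ∈ (0,1), ‖g‖_{C^r} ≤ δ ‖g‖_{C^t} + C δ^{(s−r)/(t−r)} ‖g‖_{C^s}. -/
/-!
Write `Δ_h` for the forward difference and `k = ⌈s⌉`, `m = ⌈r⌉`, `M = ⌈t⌉`. The operator identity
`Δ_{2h} = Δ_h (Δ_h + 2)` gives `|Δ_h^p g| ≤ 2^{-p} ‖Δ_{2h}^p g‖ + 2^p ‖Δ_h^{p+1} g‖`. Iterating this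
over dyadic scales (Marchaud's argument), a bound `B u^τ` with `τ > p` on the differences of order
`p + 1` at scales `u ≤ 1`, together with boundedness of the differences of order `p` at scales in
`(1/2, 1]`, yields `|Δ_h^p g| ≲ h^p` for `h ≤ 1`. Descending from order `M` to order `m` this bounds
`|Δ_h^m g|` by `C (‖g‖_{C^s} + ‖g‖_{C^t}) h^r` for `h ≤ 1`; for `h ≥ 1` the `C^s` bound alone
suffices because `s < r`. Applying this to `x ↦ g (a x)` with `a^{t-r}` proportional to `δ`
balances the two contributions into `δ ‖g‖_{C^t} + C δ^{(s-r)/(t-r)} ‖g‖_{C^s}`.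
-/

open scoped ENNReal

noncomputable section

/-- `m`-fold iterated first-order difference operator `δ_h^m`. -/
def iterDiff (h : ℝ) : ℕ → (ℝ → ℝ) → ℝ → ℝ
  | 0, g => g
  | m + 1, g => fun x => iterDiff h m g (x + h) - iterDiff h m g x

/-- Hölder–Zygmund norm `‖g‖_{C^β} = sup |g| + sup_{h ≠ 0} |δ_h^{⌊β⌋+1} g(x)|/|h|^β`
(extended-real valued; `⌊β⌋+1 = ⌈β⌉` for `β ≥ 0`, where `⌊β⌋` is the greatest integer
strictly less than `β`). -/
def zygNorm (β : ℝ) (g : ℝ → ℝ) : ℝ≥0∞ :=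
  (⨆ x : ℝ, ENNReal.ofReal |g x|) +
    ⨆ (x : ℝ) (h : ℝ) (_ : h ≠ 0),
      ENNReal.ofReal (|iterDiff h ⌈β⌉₊ g x| / |h| ^ β)

open fwdDiff

theorem iterDiff_eq_fwdDiff_iter (h : ℝ) (p : ℕ) (g : ℝ → ℝ) :
    iterDiff h p g = Δ_[h] ^[p] g := by
  induction p with
  | zero => rfl
  | succ p ih => rw [Function.iterate_succ_apply', ← ih]; rfl

theorem abs_fwdDiff_iter_le {f : ℝ → ℝ} {c : ℝ} (hf : ∀ y, |f y| ≤ c) (h : ℝ) (n : ℕ) (x : ℝ) :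
    |Δ_[h] ^[n] f x| ≤ 2 ^ n * c := by
  induction n generalizing x with
  | zero => simpa using hf x
  | succ n ih =>
    rw [Function.iterate_succ_apply', fwdDiff, pow_succ]
    linarith [abs_sub (Δ_[h] ^[n] f (x + h)) (Δ_[h] ^[n] f x), ih x, ih (x + h)]

theorem fwdDiff_iter_comp_mul_left (g : ℝ → ℝ) (a u : ℝ) (p : ℕ) (x : ℝ) :
    Δ_[u] ^[p] (fun y ↦ g (a * y)) x = Δ_[a * u] ^[p] g (a * x) := by
  simp [fwdDiff_iter_eq_sum_shift, mul_add, mul_left_comm]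

theorem fwdDiff_iter_neg (g : ℝ → ℝ) (h : ℝ) (p : ℕ) (x : ℝ) :
    Δ_[-h] ^[p] g x = (-1) ^ p * Δ_[h] ^[p] g (x - p * h) := by
  induction p generalizing x with
  | zero => simp
  | succ p ih =>
    simp only [Function.iterate_succ_apply', fwdDiff, ih]
    push_cast
    ring_nf

section

open Finset

open fwdDiff_aux in
theorem fwdDiff_iter_two_mul (g : ℝ → ℝ) (h : ℝ) (p : ℕ) (x : ℝ) :
    Δ_[2 * h] ^[p] g x =
      ∑ j ∈ range (p + 1), (p.choose j * 2 ^ (p - j) : ℝ) * Δ_[h] ^[p + j] g x := by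
  set D := fwdDiffₗ ℝ ℝ h
  have hD : fwdDiffₗ ℝ ℝ (2 * h) = D * (D + 2) := by
    ext f y
    simp [D, fwdDiff, two_mul, ← add_assoc]
    ring
  have hc : Commute D (D + 2) := (Commute.refl D).add_right (Commute.ofNat_right D 2)
  rw [← coe_fwdDiffₗ_pow, hD, hc.mul_pow, (Commute.ofNat_right D 2).add_pow, mul_sum,
    LinearMap.sum_apply, Finset.sum_apply]
  refine sum_congr rfl fun j _ => ?_
  rw [← coe_fwdDiffₗ_pow, pow_add, mul_assoc (D ^ j),
    show (2 : Module.End ℤ (ℝ → ℝ)) ^ (p - j) * (p.choose j : Module.End ℤ (ℝ → ℝ))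
      = ((2 ^ (p - j) * p.choose j : ℕ) : Module.End ℤ (ℝ → ℝ)) by push_cast; rfl,
    Module.End.mul_apply, Module.End.mul_apply, Module.End.natCast_apply, map_nsmul,
    map_nsmul, Pi.smul_apply, nsmul_eq_mul]
  push_cast
  rw [Module.End.mul_apply]
  ring

theorem abs_fwdDiff_iter_le_of_two_mul {g : ℝ → ℝ} {h c d : ℝ} {p : ℕ}
    (hc : ∀ y, |Δ_[h] ^[p + 1] g y| ≤ c) (hd : ∀ y, |Δ_[2 * h] ^[p] g y| ≤ d) (x : ℝ) :
    |Δ_[h] ^[p] g x| ≤ d / 2 ^ p + 2 ^ p * c := by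
  have hc0 : 0 ≤ c := (abs_nonneg _).trans (hc 0)
  set R := ∑ j ∈ range p,
    (p.choose (j + 1) * 2 ^ (p - (j + 1)) : ℝ) * Δ_[h] ^[j] (Δ_[h] ^[p + 1] g) x
  have hsplit : Δ_[2 * h] ^[p] g x = 2 ^ p * Δ_[h] ^[p] g x + R := by
    rw [fwdDiff_iter_two_mul, sum_range_succ', add_comm]
    congr 1
    · simp
    · refine sum_congr rfl fun j _ => ?_
      rw [← Function.iterate_add_apply, show j + (p + 1) = p + (j + 1) by ring]
  have hR : |R| ≤ 2 ^ p * (2 ^ p * c) := by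
    calc |R| ≤ ∑ j ∈ range p, (p.choose (j + 1) : ℝ) * (2 ^ p * c) := by
          refine (abs_sum_le_sum_abs _ _).trans (sum_le_sum fun j hj => ?_)
          rw [abs_mul, abs_of_nonneg (by positivity), mul_assoc]
          refine mul_le_mul_of_nonneg_left ?_ (by positivity)
          calc 2 ^ (p - (j + 1)) * |Δ_[h] ^[j] (Δ_[h] ^[p + 1] g) x|
              ≤ 2 ^ (p - (j + 1)) * (2 ^ j * c) := by gcongr; exact abs_fwdDiff_iter_le hc h j x
            _ ≤ 2 ^ p * c := by
              rw [← mul_assoc, ← pow_add]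
              gcongr
              · norm_num
              · have := mem_range.mp hj; omega
      _ ≤ 2 ^ p * (2 ^ p * c) := by
          rw [← sum_mul]
          gcongr
          have := Nat.sum_range_choose p
          rw [sum_range_succ'] at this
          exact_mod_cast (Nat.le_add_right _ _).trans this.le
  have h2p : (0 : ℝ) < 2 ^ p := by positivity
  rw [div_add' _ _ _ h2p.ne', le_div_iff₀ h2p]
  calc |Δ_[h] ^[p] g x| * 2 ^ p = |Δ_[2 * h] ^[p] g x - R| := by
        rw [hsplit, add_sub_cancel_right, abs_mul, abs_of_pos h2p, mul_comm]
    _ ≤ d + 2 ^ p * c * 2 ^ p := by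
        linarith [abs_sub (Δ_[2 * h] ^[p] g x) R, hd x]

end

section

open Set

theorem abs_fwdDiff_iter_le_pow_of_succ {g : ℝ → ℝ} {p : ℕ} {τ S B : ℝ} (hτ : (p : ℝ) < τ)
    (hB : 0 ≤ B) (hlow : ∀ h ∈ Ioc (1 / 2 : ℝ) 1, ∀ x, |Δ_[h] ^[p] g x| ≤ S)
    (hhigh : ∀ h ∈ Ioc (0 : ℝ) 1, ∀ x, |Δ_[h] ^[p + 1] g x| ≤ B * h ^ τ) :
    ∀ h ∈ Ioc (0 : ℝ) 1, ∀ x,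
      |Δ_[h] ^[p] g x| ≤ (2 ^ p * S + 2 ^ p * B / (2 ^ (τ - p) - 1)) * h ^ p := by
  set q : ℝ := 2 ^ (τ - p) with hq_def
  have hq : 1 < q := Real.one_lt_rpow one_lt_two (by linarith)
  set F := 2 ^ p * B / (q - 1)
  have hF : 0 ≤ F := div_nonneg (by positivity) (by linarith)
  have hFq : F * (q - 1) = 2 ^ p * B := div_mul_cancel₀ _ (by linarith)
  have hS : 0 ≤ S := (abs_nonneg _).trans (hlow 1 ⟨by norm_num, le_rfl⟩ 0)
  -- the subtracted term `F * h ^ τ` is what makes the dyadic induction close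
  suffices key : ∀ N : ℕ, ∀ h ∈ Ioc (0 : ℝ) 1, 1 ≤ 2 ^ N * h → ∀ x,
      |Δ_[h] ^[p] g x| ≤ (2 ^ p * S + F) * h ^ p - F * h ^ τ by
    intro h hh x
    obtain ⟨N, hN⟩ := pow_unbounded_of_one_lt h⁻¹ one_lt_two
    refine (key N h hh ?_ x).trans (sub_le_self _ (mul_nonneg hF (Real.rpow_nonneg hh.1.le _)))
    rw [inv_lt_iff_one_lt_mul₀ hh.1] at hN
    linarith
  have base : ∀ h ∈ Ioc (1 / 2 : ℝ) 1, ∀ x,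
      |Δ_[h] ^[p] g x| ≤ (2 ^ p * S + F) * h ^ p - F * h ^ τ := by
    intro h hh x
    have h1 : 1 ≤ 2 ^ p * h ^ p := by
      rw [← mul_pow]; exact one_le_pow₀ (by linarith [hh.1])
    have h2 : h ^ τ ≤ h ^ p := by
      rw [← Real.rpow_natCast]
      exact Real.rpow_le_rpow_of_exponent_ge (by linarith [hh.1]) hh.2 hτ.le
    nlinarith [hlow h hh x, mul_le_mul_of_nonneg_left h2 hF]
  clear_value q F
  intro N
  induction N with
  | zero =>
    intro h hh hN
    exact base h ⟨by linarith [hh.2], hh.2⟩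
  | succ N ih =>
    intro h hh hN x
    rcases lt_or_ge (1 / 2) h with hbig | hsmall
    · exact base h ⟨hbig, hh.2⟩ x
    have hd := ih (2 * h) ⟨by linarith [hh.1], by linarith⟩ (by rw [pow_succ] at hN; linarith)
    refine (abs_fwdDiff_iter_le_of_two_mul (hhigh h hh) hd x).trans (le_of_eq ?_)
    have h2τ : (2 * h) ^ τ = 2 ^ p * q * h ^ τ := by
      rw [hq_def, Real.mul_rpow zero_le_two hh.1.le, Real.rpow_sub_natCast two_ne_zero]
      field_simp
    rw [mul_pow, h2τ, show 2 ^ p * (B * h ^ τ) = F * (q - 1) * h ^ τ by rw [hFq]; ring]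
    field_simp
    ring

theorem exists_abs_fwdDiff_iter_le_rpow_min {k M : ℕ} {t : ℝ} (htM : t ≤ M) (hMt : (M : ℝ) < t + 1)
    {p : ℕ} (hkp : k ≤ p) (hpM : p ≤ M) :
    ∃ A : ℝ, 0 ≤ A ∧ ∀ (g : ℝ → ℝ) (S T : ℝ),
      (∀ u ∈ Ioc (1 / 2 : ℝ) 1, ∀ x, |Δ_[u] ^[k] g x| ≤ S) →
      (∀ u ∈ Ioc (0 : ℝ) 1, ∀ x, |Δ_[u] ^[M] g x| ≤ T * u ^ t) →
      ∀ h ∈ Ioc (0 : ℝ) 1, ∀ x, |Δ_[h] ^[p] g x| ≤ A * (S + T) * h ^ min (p : ℝ) t := by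
  induction hpM using Nat.decreasingInduction with
  | self =>
    refine ⟨1, zero_le_one, fun g S T hS hT h hh x => ?_⟩
    have hS0 : 0 ≤ S := (abs_nonneg _).trans (hS 1 ⟨by norm_num, le_rfl⟩ 0)
    rw [min_eq_right htM]
    nlinarith [hT h hh x, Real.rpow_nonneg hh.1.le t]
  | of_succ j hjM ih =>
    obtain ⟨A, hA, hbound⟩ := ih (by omega)
    have hjt : (j : ℝ) < t := by
      have : (j : ℝ) + 1 ≤ M := by exact_mod_cast hjM
      linarith
    set τ := min ((j + 1 : ℕ) : ℝ) t
    have hjτ : (j : ℝ) < τ := lt_min (by push_cast; linarith) hjt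
    have hq : (1 : ℝ) < 2 ^ (τ - j) := Real.one_lt_rpow one_lt_two (by linarith)
    set B := 2 ^ j * A / (2 ^ (τ - j) - 1)
    have hB : 0 ≤ B := div_nonneg (by positivity) (by linarith)
    refine ⟨2 ^ j * 2 ^ (j - k) + B, by positivity,
      fun g S T hS hT h hh x => ?_⟩
    have hS0 : 0 ≤ S := (abs_nonneg _).trans (hS 1 ⟨by norm_num, le_rfl⟩ 0)
    have hT0 : 0 ≤ T := (abs_nonneg _).trans ((hT 1 ⟨one_pos, le_rfl⟩ 0).trans_eq (by simp))
    have hlow : ∀ u ∈ Ioc (1 / 2 : ℝ) 1, ∀ y, |Δ_[u] ^[j] g y| ≤ 2 ^ (j - k) * S := by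
      intro u hu y
      rw [show j = (j - k) + k by omega, Function.iterate_add_apply, Nat.add_sub_cancel]
      exact abs_fwdDiff_iter_le (hS u hu) u _ y
    have := abs_fwdDiff_iter_le_pow_of_succ hjτ (mul_nonneg hA (add_nonneg hS0 hT0)) hlow
      (hbound g S T hS hT) h hh x
    rw [min_eq_left hjt.le, Real.rpow_natCast]
    refine this.trans (mul_le_mul_of_nonneg_right ?_ (pow_nonneg hh.1.le j))
    rw [show 2 ^ j * (A * (S + T)) / (2 ^ (τ - j) - 1) = B * (S + T) by ring]
    nlinarith [mul_nonneg (by positivity : (0:ℝ) ≤ 2 ^ j * 2 ^ (j - k)) hT0]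

theorem exists_abs_fwdDiff_iter_ceil_le_rpow {s r t : ℝ} (hs : 0 ≤ s) (hsr : s < r)
    (hrt : r < t) :
    ∃ C : ℝ, 0 < C ∧ ∀ (g : ℝ → ℝ) (S T : ℝ),
      (∀ u > 0, ∀ x, |Δ_[u] ^[⌈s⌉₊] g x| ≤ S * u ^ s) →
      (∀ u ∈ Ioc (0 : ℝ) 1, ∀ x, |Δ_[u] ^[⌈t⌉₊] g x| ≤ T * u ^ t) →
      ∀ h > 0, ∀ x, |Δ_[h] ^[⌈r⌉₊] g x| ≤ C * (S + T) * h ^ r := by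
  have hkm : ⌈s⌉₊ ≤ ⌈r⌉₊ := Nat.ceil_le_ceil hsr.le
  obtain ⟨A, hA, hlevel⟩ := exists_abs_fwdDiff_iter_le_rpow_min (Nat.le_ceil t)
    (Nat.ceil_lt_add_one (by linarith)) hkm (Nat.ceil_le_ceil hrt.le)
  refine ⟨A + 2 ^ (⌈r⌉₊ - ⌈s⌉₊), by positivity, fun g S T hS hT h hh x => ?_⟩
  have hS0 : 0 ≤ S := (abs_nonneg _).trans ((hS 1 one_pos 0).trans_eq (by simp))
  have hT0 : 0 ≤ T := (abs_nonneg _).trans ((hT 1 ⟨one_pos, le_rfl⟩ 0).trans_eq (by simp))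
  rcases le_or_gt h 1 with hh1 | hh1
  · have hlow : ∀ u ∈ Ioc (1 / 2 : ℝ) 1, ∀ y, |Δ_[u] ^[⌈s⌉₊] g y| ≤ S := fun u hu y =>
      (hS u (by linarith [hu.1]) y).trans
        (mul_le_of_le_one_right hS0 (Real.rpow_le_one (by linarith [hu.1]) hu.2 hs))
    have hexp : h ^ min (⌈r⌉₊ : ℝ) t ≤ h ^ r :=
      Real.rpow_le_rpow_of_exponent_ge hh hh1 (le_min (Nat.le_ceil r) hrt.le)
    calc |Δ_[h] ^[⌈r⌉₊] g x| ≤ A * (S + T) * h ^ min (⌈r⌉₊ : ℝ) t :=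
          hlevel g S T hlow hT h ⟨hh, hh1⟩ x
      _ ≤ A * (S + T) * h ^ r := by gcongr
      _ ≤ (A + 2 ^ (⌈r⌉₊ - ⌈s⌉₊)) * (S + T) * h ^ r := by
          gcongr; exact le_add_of_nonneg_right (by positivity)
  · have hexp : h ^ s ≤ h ^ r := Real.rpow_le_rpow_of_exponent_le hh1.le hsr.le
    rw [show ⌈r⌉₊ = (⌈r⌉₊ - ⌈s⌉₊) + ⌈s⌉₊ by omega, Function.iterate_add_apply,
      Nat.add_sub_cancel]
    calc |Δ_[h] ^[⌈r⌉₊ - ⌈s⌉₊] (Δ_[h] ^[⌈s⌉₊] g) x| ≤ 2 ^ (⌈r⌉₊ - ⌈s⌉₊) * (S * h ^ s) :=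
          abs_fwdDiff_iter_le (hS h hh) h _ x
      _ ≤ 2 ^ (⌈r⌉₊ - ⌈s⌉₊) * ((S + T) * h ^ r) := by gcongr; linarith
      _ ≤ (A + 2 ^ (⌈r⌉₊ - ⌈s⌉₊)) * (S + T) * h ^ r := by
          rw [← mul_assoc]; gcongr; exact le_add_of_nonneg_left hA

end

theorem abs_fwdDiff_iter_le_abs_rpow {g : ℝ → ℝ} {p : ℕ} {K β : ℝ}
    (hpos : ∀ h > 0, ∀ x, |Δ_[h] ^[p] g x| ≤ K * h ^ β) {h : ℝ} (hh : h ≠ 0) (x : ℝ) :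
    |Δ_[h] ^[p] g x| ≤ K * |h| ^ β := by
  rcases hh.lt_or_gt with hneg | hpos'
  · have e := fwdDiff_iter_neg g (-h) p x
    rw [neg_neg] at e
    rw [e, abs_mul, abs_pow, abs_neg, abs_one, one_pow, one_mul, abs_of_neg hneg]
    exact hpos (-h) (neg_pos.mpr hneg) _
  · rw [abs_of_pos hpos']
    exact hpos h hpos' x

theorem exists_abs_fwdDiff_iter_ceil_le_interpolation {s r t : ℝ} (hs : 0 ≤ s) (hsr : s < r)
    (hrt : r < t) :
    ∃ C : ℝ, 0 < C ∧ ∀ (g : ℝ → ℝ) (S T : ℝ),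
      (∀ u > 0, ∀ x, |Δ_[u] ^[⌈s⌉₊] g x| ≤ S * u ^ s) →
      (∀ u > 0, ∀ x, |Δ_[u] ^[⌈t⌉₊] g x| ≤ T * u ^ t) →
      ∀ ε > 0, ∀ h ≠ 0, ∀ x,
        |Δ_[h] ^[⌈r⌉₊] g x| ≤ (ε * T + C * ε ^ ((s - r) / (t - r)) * S) * |h| ^ r := by
  obtain ⟨C, hC, hcore⟩ := exists_abs_fwdDiff_iter_ceil_le_rpow hs hsr hrt
  set α := (s - r) / (t - r)
  refine ⟨C / C ^ α, div_pos hC (Real.rpow_pos_of_pos hC α), fun g S T hS hT ε hε => ?_⟩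
  intro h₀ hh₀
  refine abs_fwdDiff_iter_le_abs_rpow (fun h hh x => ?_) hh₀
  -- rescale `g` so that the two terms balance at scale `1`
  have hεC : 0 < ε / C := div_pos hε hC
  obtain ⟨a, ha, hat⟩ : ∃ a > 0, a ^ (t - r) = ε / C :=
    ⟨(ε / C) ^ (t - r)⁻¹, Real.rpow_pos_of_pos hεC _, by
      rw [← Real.rpow_mul hεC.le, inv_mul_cancel₀ (sub_pos.mpr hrt).ne', Real.rpow_one]⟩
  have hscale : ∀ (β S : ℝ) (p : ℕ), (∀ u > 0, ∀ x, |Δ_[u] ^[p] g x| ≤ S * u ^ β) →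
      ∀ u > 0, ∀ x, |Δ_[u] ^[p] (fun y ↦ g (a * y)) x| ≤ S * a ^ β * u ^ β := by
    intro β S p hg u hu x
    rw [fwdDiff_iter_comp_mul_left, mul_assoc, ← Real.mul_rpow ha.le hu.le]
    exact hg _ (mul_pos ha hu) _
  have := hcore (fun y ↦ g (a * y)) (S * a ^ s) (T * a ^ t) (hscale s S _ hS)
    (fun u hu => hscale t T _ hT u hu.1) (h / a) (div_pos hh ha) (x / a)
  rw [fwdDiff_iter_comp_mul_left, mul_div_cancel₀ _ ha.ne', mul_div_cancel₀ _ ha.ne'] at this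
  refine this.trans (le_of_eq ?_)
  have hsplit : ∀ β, a ^ β = a ^ (β - r) * a ^ r := fun β => by
    rw [← Real.rpow_add ha, sub_add_cancel]
  have has : a ^ (s - r) = (ε / C) ^ α := by
    rw [← hat, ← Real.rpow_mul ha.le, mul_div_cancel₀ _ (sub_pos.mpr hrt).ne']
  rw [hsplit s, hsplit t, has, hat, Real.div_rpow hh.le ha.le, Real.div_rpow hε.le hC.le]
  field_simp
  ring

theorem abs_le_toReal_zygNorm {β : ℝ} {g : ℝ → ℝ} (hg : zygNorm β g ≠ ⊤) (x : ℝ) :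
    |g x| ≤ (zygNorm β g).toReal :=
  (ENNReal.ofReal_le_iff_le_toReal hg).mp
    ((le_iSup (fun x ↦ ENNReal.ofReal |g x|) x).trans le_self_add)

theorem abs_fwdDiff_iter_le_toReal_zygNorm {β : ℝ} {g : ℝ → ℝ} (hg : zygNorm β g ≠ ⊤)
    {u : ℝ} (hu : 0 < u) (x : ℝ) :
    |Δ_[u] ^[⌈β⌉₊] g x| ≤ (zygNorm β g).toReal * u ^ β := by
  have : ENNReal.ofReal (|iterDiff u ⌈β⌉₊ g x| / |u| ^ β) ≤ zygNorm β g :=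
    le_add_left (le_iSup₂_of_le x u (le_iSup_of_le hu.ne' le_rfl))
  rwa [ENNReal.ofReal_le_iff_le_toReal hg, abs_of_pos hu,
    div_le_iff₀ (Real.rpow_pos_of_pos hu β), iterDiff_eq_fwdDiff_iter] at this

theorem zygNorm_le_ofReal_add {β a b : ℝ} {g : ℝ → ℝ} (ha : ∀ x, |g x| ≤ a)
    (hb : ∀ h ≠ 0, ∀ x, |Δ_[h] ^[⌈β⌉₊] g x| ≤ b * |h| ^ β) :
    zygNorm β g ≤ ENNReal.ofReal a + ENNReal.ofReal b := by
  refine add_le_add (iSup_le fun x ↦ ENNReal.ofReal_le_ofReal (ha x))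
    (iSup₂_le fun x h ↦ iSup_le fun hh ↦ ENNReal.ofReal_le_ofReal ?_)
  rw [div_le_iff₀ (Real.rpow_pos_of_pos (abs_pos.mpr hh) β), iterDiff_eq_fwdDiff_iter]
  exact hb h hh x

/-- **Interpolation inequality for Hölder–Zygmund norms.**
For `0 ≤ s < r < t` there is `C > 0` such that for every bounded `g` and `δ ∈ (0,1)`,
`‖g‖_{C^r} ≤ δ ‖g‖_{C^t} + C δ^{(s−r)/(t−r)} ‖g‖_{C^s}`. -/
theorem statement2 (s r t : ℝ) (hs : 0 ≤ s) (hsr : s < r) (hrt : r < t) :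
    ∃ C : ℝ, 0 < C ∧ ∀ g : ℝ → ℝ, (∃ M, ∀ x, |g x| ≤ M) →
      ∀ δ : ℝ, δ ∈ Set.Ioo (0 : ℝ) 1 →
        zygNorm r g ≤ ENNReal.ofReal δ * zygNorm t g
          + ENNReal.ofReal (C * δ ^ ((s - r) / (t - r))) * zygNorm s g := by
  obtain ⟨C, hC, hinterp⟩ := exists_abs_fwdDiff_iter_ceil_le_interpolation hs hsr hrt
  refine ⟨C + 1, by positivity, fun g _ δ hδ => ?_⟩
  set α := (s - r) / (t - r)
  have hδα : 1 ≤ δ ^ α := Real.one_le_rpow_of_pos_of_le_one_of_nonpos hδ.1 hδ.2.le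
    (div_nonpos_of_nonpos_of_nonneg (by linarith) (by linarith))
  have hCδα : 0 < (C + 1) * δ ^ α := mul_pos (by linarith) (by linarith)
  by_cases hT : zygNorm t g = ⊤
  · simp [hT, ENNReal.mul_top, hδ.1]
  by_cases hS : zygNorm s g = ⊤
  · rw [hS, ENNReal.mul_top (ENNReal.ofReal_pos.mpr hCδα).ne']
    exact le_top.trans le_add_self
  set S := (zygNorm s g).toReal
  set T := (zygNorm t g).toReal
  have hS0 : 0 ≤ δ ^ α * S := mul_nonneg (by linarith) ENNReal.toReal_nonneg
  have hT0 : 0 ≤ δ * T := mul_nonneg hδ.1.le ENNReal.toReal_nonneg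
  calc zygNorm r g
      ≤ ENNReal.ofReal (δ ^ α * S)
        + ENNReal.ofReal (δ * T + C * δ ^ α * S) :=
        zygNorm_le_ofReal_add
          (fun x ↦ (abs_le_toReal_zygNorm hS x).trans (le_mul_of_one_le_left (by positivity) hδα))
          (hinterp g S T (fun u hu ↦ abs_fwdDiff_iter_le_toReal_zygNorm hS hu)
            (fun u hu ↦ abs_fwdDiff_iter_le_toReal_zygNorm hT hu) δ hδ.1)
    _ = ENNReal.ofReal δ * zygNorm t g
          + ENNReal.ofReal ((C + 1) * δ ^ α) * zygNorm s g := by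
        rw [← ENNReal.ofReal_toReal hT, ← ENNReal.ofReal_toReal hS, ← ENNReal.ofReal_mul hδ.1.le,
          ← ENNReal.ofReal_mul hCδα.le, ← ENNReal.ofReal_add hS0 (by positivity),
          ← ENNReal.ofReal_add hT0 (by positivity)]
        congr 1
        ring

end
end

section
/- Let T, Λ, C₀ > 0. Let σ : [0,T] × ℝ → ℝ satisfy |σ(t,v)| ≤ Λ for all (t,v). Let u : [0,T] × ℝ × ℝ → ℝ be such that for each fixed (t,x) the map v ↦ u(t,v,x) is differentiable, and suppose that |u(t,v,x) − u(t,v',x')| ≤ (1/2)(|v−v'| + |x−x'|) for all t ∈ [0,T] and v, v', x, x' ∈ ℝ, and that |∂_v u(t,v,x) − ∂_v u(t,v,x')| ≤ C₀ |x−x'|^{1/2} for all t ∈ [0,T] and v, x, x' ∈ ℝ. Define φ(t,v,x,x') := x − x' + u(t,v,x) − u(t,v,x') and h(t,v,x,x';w) := u(t, v + σ(t,v)w, x) − u(t,v,x) − u(t, v + σ(t,v)w, x') + u(t,v,x'). Then there exists κ > 0, depending only on Λ and C₀, such that for all t ∈ [0,T] and v, w, x, x' ∈ ℝ: (i) |h(t,v,x,x';w)|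 ≤ κ |w| · min(1, |x−x'|^{1/2}); and (ii) |x − x'| ≤ 2 min(|φ(t,v,x,x')|, |φ(t,v,x,x') + h(t,v,x,x';w)|). -/
lemma aux_mvt {g g' : ℝ → ℝ} (h : ∀ y, HasDerivAt g (g' y) y) {M : ℝ}
    (hM : ∀ y, |g' y| ≤ M) (a b : ℝ) : |g b - g a| ≤ M * |b - a| := by
  have := Convex.norm_image_sub_le_of_norm_hasDerivWithin_le
    (f := g) (f' := g') (fun y _ => (h y).hasDerivWithinAt)
    (fun y _ => hM y) convex_univ (Set.mem_univ a) (Set.mem_univ b)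
  simpa [Real.norm_eq_abs] using this

/-- **Key estimates on the Zvonkin-transformed distance (Lemma on `φ_m`, `h_m`).**
Given `Λ, C₀ > 0` there is `κ > 0` (depending only on `Λ` and `C₀`) such that: for any
`T > 0`, any `σ` with `|σ| ≤ Λ`, and any `u` differentiable in `v` with
`|u(t,v,x) − u(t,v',x')| ≤ ½(|v−v'| + |x−x'|)` and
`|∂_v u(t,v,x) − ∂_v u(t,v,x')| ≤ C₀ |x−x'|^{1/2}` for `t ∈ [0,T]`, the functions
`φ(t,v,x,x') = x − x' + u(t,v,x) − u(t,v,x')` and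
`h(t,v,x,x';w) = u(t,v+σ(t,v)w,x) − u(t,v,x) − u(t,v+σ(t,v)w,x') + u(t,v,x')` satisfy
`|h| ≤ κ|w| min(1, |x−x'|^{1/2})` and `|x−x'| ≤ 2 min(|φ|, |φ + h|)`. -/
theorem statement3 (Λ C₀ : ℝ) (hΛ : 0 < Λ) (hC₀ : 0 < C₀) :
    ∃ κ : ℝ, 0 < κ ∧
      ∀ (T : ℝ), 0 < T →
      ∀ (σ : ℝ → ℝ → ℝ) (u uv : ℝ → ℝ → ℝ → ℝ),
        (∀ t v : ℝ, |σ t v| ≤ Λ) →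
        (∀ t v x : ℝ, HasDerivAt (fun v' => u t v' x) (uv t v x) v) →
        (∀ t ∈ Set.Icc (0 : ℝ) T, ∀ v v' x x' : ℝ,
          |u t v x - u t v' x'| ≤ (1 / 2) * (|v - v'| + |x - x'|)) →
        (∀ t ∈ Set.Icc (0 : ℝ) T, ∀ v x x' : ℝ,
          |uv t v x - uv t v x'| ≤ C₀ * |x - x'| ^ ((1 : ℝ) / 2)) →
        ∀ t ∈ Set.Icc (0 : ℝ) T, ∀ v w x x' : ℝ,
          |u t (v + σ t v * w) x - u t v x - u t (v + σ t v * w) x' + u t v x'| ≤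
              κ * |w| * min 1 (|x - x'| ^ ((1 : ℝ) / 2)) ∧
          |x - x'| ≤ 2 * min |x - x' + u t v x - u t v x'|
              |x - x' + u t v x - u t v x' +
                (u t (v + σ t v * w) x - u t v x - u t (v + σ t v * w) x' + u t v x')| := by
  refine ⟨Λ * (1 + C₀), by positivity, ?_⟩
  intro T hT σ u uv hσ hderiv hLip hHol t ht v w x x'
  set s := σ t v * w with hs_def
  have hs : |s| ≤ Λ * |w| := by
    rw [hs_def, abs_mul]
    exact mul_le_mul_of_nonneg_right (hσ t v) (abs_nonneg w)
  have hr : (0:ℝ) ≤ |x - x'| ^ ((1 : ℝ) / 2) := Real.rpow_nonneg (abs_nonneg _) _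
  -- the difference function g
  set g : ℝ → ℝ := fun y => u t y x - u t y x' with hg
  have hgd : ∀ y, HasDerivAt g (uv t y x - uv t y x') y :=
    fun y => (hderiv t y x).sub (hderiv t y x')
  have hgM : ∀ y, |uv t y x - uv t y x'| ≤ C₀ * |x - x'| ^ ((1:ℝ)/2) :=
    fun y => hHol t ht y x x'
  have hEq : u t (v + s) x - u t v x - u t (v + s) x' + u t v x' = g (v + s) - g v := by
    simp only [hg]; ring
  constructor
  · rw [hEq]
    have hmin := mul_min_of_nonneg (1:ℝ) (|x - x'| ^ ((1:ℝ)/2))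
      (show (0:ℝ) ≤ Λ * (1 + C₀) * |w| by positivity)
    rw [show Λ * (1 + C₀) * |w| * min 1 (|x - x'| ^ ((1:ℝ)/2))
        = min (Λ * (1 + C₀) * |w| * 1) (Λ * (1 + C₀) * |w| * (|x - x'| ^ ((1:ℝ)/2))) from hmin]
    apply le_min
    · -- Lipschitz bound
      have h1 : |u t (v + s) x - u t v x| ≤ (1/2) * (|v + s - v| + |x - x|) :=
        hLip t ht (v + s) v x x
      have h2 : |u t (v + s) x' - u t v x'| ≤ (1/2) * (|v + s - v| + |x' - x'|) :=
        hLip t ht (v + s) v x' x'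
      have h3 : |g (v + s) - g v| ≤ |u t (v + s) x - u t v x| + |u t (v + s) x' - u t v x'| := by
        have he : g (v + s) - g v
            = (u t (v + s) x - u t v x) - (u t (v + s) x' - u t v x') := by
          simp only [hg]; ring
        rw [he]; exact abs_sub _ _
      simp only [sub_self, abs_zero, add_zero, add_sub_cancel_left] at h1 h2
      have hfin : Λ * |w| ≤ Λ * (1 + C₀) * |w| * 1 := by
        nlinarith [mul_nonneg (mul_nonneg hΛ.le hC₀.le) (abs_nonneg w)]
      linarith
    · have := aux_mvt hgd hgM v (v + s)
      have : |g (v + s) - g v| ≤ C₀ * |x - x'| ^ ((1:ℝ)/2) * |s| := by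
        simpa using this
      calc |g (v + s) - g v| ≤ C₀ * |x - x'| ^ ((1:ℝ)/2) * |s| := this
        _ ≤ C₀ * |x - x'| ^ ((1:ℝ)/2) * (Λ * |w|) := by
            apply mul_le_mul_of_nonneg_left hs (by positivity)
        _ ≤ Λ * (1 + C₀) * |w| * (|x - x'| ^ ((1:ℝ)/2)) := by
            nlinarith [mul_nonneg (mul_nonneg hΛ.le (abs_nonneg w)) hr]
  · have key : ∀ a : ℝ, |a| ≤ (1/2) * |x - x'| → |x - x'| ≤ 2 * |x - x' + a| := by
      intro a ha
      have h1 : |x - x'| ≤ |x - x' + a| + |a| := by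
        calc |x - x'| = |(x - x' + a) + (-a)| := by ring_nf
          _ ≤ |x - x' + a| + |(-a)| := abs_add_le _ _
          _ = |x - x' + a| + |a| := by rw [abs_neg]
      linarith
    have ha1 : |u t v x - u t v x'| ≤ (1/2) * |x - x'| := by
      have := hLip t ht v v x x'; simpa using this
    have ha2 : |u t (v + s) x - u t (v + s) x'| ≤ (1/2) * |x - x'| := by
      have := hLip t ht (v + s) (v + s) x x'; simpa using this
    rw [show (2:ℝ) * min |x - x' + u t v x - u t v x'|
        |x - x' + u t v x - u t v x' +
          (u t (v + s) x - u t v x - u t (v + s) x' + u t v x')|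
        = min (2 * |x - x' + u t v x - u t v x'|)
          (2 * |x - x' + u t v x - u t v x' +
            (u t (v + s) x - u t v x - u t (v + s) x' + u t v x')|) from
      mul_min_of_nonneg _ _ (by norm_num)]
    apply le_min
    · have := key (u t v x - u t v x') ha1
      calc |x - x'| ≤ 2 * |x - x' + (u t v x - u t v x')| := this
        _ = 2 * |x - x' + u t v x - u t v x'| := by ring_nf
    · have := key (u t (v + s) x - u t (v + s) x') ha2
      calc |x - x'| ≤ 2 * |x - x' + (u t (v + s) x - u t (v + s) x')| := this
        _ = _ := by ring_nf
end

section
/- Let β ∈ (0,1] and let (a_n)_{n≥1} be a strictly increasing bounded sequence of real numbers such that Σ_{n≥1} (a_{n+1} − a_n)^β = +∞. Define h : ℝ → [0,∞] by h(y) = β (y − a_n)^{β−1} if y ∈ (a_n, (a_n + a_{n+1})/2) for some n, h(y) = β (a_{n+1} − y)^{β−1} if y ∈ ((a_n + a_{n+1})/2, a_{n+1}) for some n, and h(y) = 0 otherwise. Then for every τ > 0 and every θ ∈ ℝ, ∫_ℝ h(y) Γ(τ, y − θ) dy = +∞. -/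
/-! On the left half `(a n, (a n + a (n+1))/2)` of each gap, `h` is the derivative of
`(y - a n) ^ β`, so its integral there is `((a (n+1) - a n) / 2) ^ β`. All gaps lie in the
bounded interval `[a 0, M]`, on which the Gaussian `Γ(τ, · - θ)` is bounded below by some
`c > 0`. Summing over the disjoint half-gaps bounds the integral below by
`c · 2^{-β} · Σ (a (n+1) - a n) ^ β = ∞`. -/

open MeasureTheory
open scoped ENNReal

noncomputable section

/-- The one-dimensional Gaussian density `Γ(t,x) = (2πt)^{−1/2} exp(−x²/(2t))`. -/
def gauss1 (t x : ℝ) : ℝ :=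
  (2 * Real.pi * t) ^ (-(1 : ℝ) / 2) * Real.exp (-x ^ 2 / (2 * t))

open Set

lemma integral_mul_rpow_sub_sub_one {p q β : ℝ} (hβ : 0 < β) :
    ∫ y in p..q, β * (y - p) ^ (β - 1) = (q - p) ^ β := by
  rw [intervalIntegral.integral_const_mul, intervalIntegral.integral_comp_sub_right
    (fun x => x ^ (β - 1)), sub_self, integral_rpow (Or.inl (by linarith)), sub_add_cancel,
    Real.zero_rpow hβ.ne']
  field_simp
  simp

lemma lintegral_Ioo_ofReal_mul_rpow_sub_sub_one {p q β : ℝ} (hpq : p ≤ q) (hβ : 0 < β) :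
    ∫⁻ y in Ioo p q, ENNReal.ofReal (β * (y - p) ^ (β - 1)) = ENNReal.ofReal ((q - p) ^ β) := by
  have hint : IntegrableOn (fun y => β * (y - p) ^ (β - 1)) (Ioc p q) := by
    rw [← intervalIntegrable_iff_integrableOn_Ioc_of_le hpq]
    simpa using ((intervalIntegral.intervalIntegrable_rpow' (by linarith : -1 < β - 1)
      (a := 0) (b := q - p)).comp_sub_right p).const_mul β
  have hnonneg : 0 ≤ᵐ[volume.restrict (Ioc p q)] fun y => β * (y - p) ^ (β - 1) := by
    filter_upwards [ae_restrict_mem measurableSet_Ioc] with y hy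
    have : 0 < y - p := sub_pos.2 hy.1
    positivity
  rw [restrict_Ioo_eq_restrict_Ioc, ← ofReal_integral_eq_lintegral_ofReal hint hnonneg,
    ← intervalIntegral.integral_of_le hpq, integral_mul_rpow_sub_sub_one hβ]

lemma gauss1_pos {t : ℝ} (ht : 0 < t) (x : ℝ) : 0 < gauss1 t x := by
  unfold gauss1; positivity

lemma continuous_gauss1 (t : ℝ) : Continuous (gauss1 t) := by
  unfold gauss1; fun_prop

lemma exists_pos_forall_le_gauss1 {t : ℝ} (ht : 0 < t) (θ L R : ℝ) :
    ∃ c > 0, ∀ y ∈ Icc L R, c ≤ gauss1 t (y - θ) := by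
  rcases (Icc L R).eq_empty_or_nonempty with hempty | hne
  · exact ⟨1, one_pos, by simp [hempty]⟩
  obtain ⟨y₀, -, hy₀⟩ := isCompact_Icc.exists_isMinOn hne
    ((continuous_gauss1 t).comp (continuous_sub_right θ)).continuousOn
  exact ⟨gauss1 t (y₀ - θ), gauss1_pos ht _, hy₀⟩

lemma tsum_ofReal_div_rpow_eq_top {d : ℕ → ℝ} (hd : ∀ n, 0 ≤ d n) {r β : ℝ} (hr : 0 < r)
    (hdiv : ∑' n, ENNReal.ofReal (d n ^ β) = ⊤) :
    ∑' n, ENNReal.ofReal ((d n / r) ^ β) = ⊤ := by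
  have hr' : 0 < (r ^ β)⁻¹ := by positivity
  simp_rw [Real.div_rpow (hd _) hr.le, div_eq_mul_inv,
    ENNReal.ofReal_mul (Real.rpow_nonneg (hd _) _), ENNReal.tsum_mul_right, hdiv]
  exact ENNReal.top_mul (by simpa using hr')

lemma tsum_setLIntegral_le_lintegral {α ι : Type*} [MeasurableSpace α] [Countable ι]
    {μ : Measure α} {s : ι → Set α} (hs : ∀ i, MeasurableSet (s i))
    (hdisj : Pairwise (Function.onFun Disjoint s)) (f : α → ℝ≥0∞) :
    ∑' i, ∫⁻ x in s i, f x ∂μ ≤ ∫⁻ x, f x ∂μ :=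
  (lintegral_iUnion hs hdisj f).symm.trans_le (setLIntegral_le_lintegral _ _)

theorem statement13_general (β : ℝ) (hβ : β ∈ Set.Ioc (0 : ℝ) 1) (a : ℕ → ℝ)
    (ha : StrictMono a) (hbdd : ∃ M, ∀ n, a n ≤ M)
    (hdiv : (∑' n : ℕ, ENNReal.ofReal ((a (n + 1) - a n) ^ β)) = ⊤)
    (h : ℝ → ℝ≥0∞)
    (hh1 : ∀ n : ℕ, ∀ y ∈ Set.Ioo (a n) ((a n + a (n + 1)) / 2),
      h y = ENNReal.ofReal (β * (y - a n) ^ (β - 1))) :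
    ∀ τ : ℝ, 0 < τ → ∀ θ : ℝ,
      (∫⁻ y : ℝ, h y * ENNReal.ofReal (gauss1 τ (y - θ))) = ⊤ := by
  intro τ hτ θ
  obtain ⟨M, hM⟩ := hbdd
  obtain ⟨c, hc, hcg⟩ := exists_pos_forall_le_gauss1 hτ θ (a 0) M
  set S : ℕ → Set ℝ := fun n => Ioo (a n) ((a n + a (n + 1)) / 2)
  have hS : ∀ n, S n ⊆ Ioo (a n) (a (n + 1)) := fun n =>
    Ioo_subset_Ioo_right (by linarith [ha n.lt_succ_self])
  have hpiece (n : ℕ) : ENNReal.ofReal c * ENNReal.ofReal (((a (n + 1) - a n) / 2) ^ β) ≤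
      ∫⁻ y in S n, h y * ENNReal.ofReal (gauss1 τ (y - θ)) := calc
    _ = (∫⁻ y in S n, ENNReal.ofReal (β * (y - a n) ^ (β - 1))) * ENNReal.ofReal c := by
      rw [lintegral_Ioo_ofReal_mul_rpow_sub_sub_one (by linarith [ha n.lt_succ_self]) hβ.1,
        mul_comm]
      ring_nf
    _ ≤ ∫⁻ y in S n, h y * ENNReal.ofReal (gauss1 τ (y - θ)) := by
      rw [← lintegral_mul_const'' _ (by fun_prop)]
      refine setLIntegral_mono' measurableSet_Ioo fun y hy => ?_
      rw [hh1 n y hy]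
      gcongr
      exact hcg y ⟨(ha.monotone n.zero_le).trans (hS n hy).1.le, (hS n hy).2.le.trans (hM _)⟩
  have hdisj : Pairwise (Function.onFun Disjoint S) := fun m n hmn =>
    (ha.monotone.pairwise_disjoint_on_Ioo_succ hmn).mono (hS m) (hS n)
  refine top_le_iff.mp (calc
    ⊤ = ∑' n, ENNReal.ofReal c * ENNReal.ofReal (((a (n + 1) - a n) / 2) ^ β) := by
      rw [ENNReal.tsum_mul_left, tsum_ofReal_div_rpow_eq_top
        (fun n => sub_nonneg.2 (ha.monotone n.le_succ)) two_pos hdiv,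
        ENNReal.mul_top (by simpa using hc)]
    _ ≤ ∑' n, ∫⁻ y in S n, h y * ENNReal.ofReal (gauss1 τ (y - θ)) :=
      ENNReal.tsum_le_tsum hpiece
    _ ≤ _ := tsum_setLIntegral_le_lintegral (fun _ => measurableSet_Ioo) hdisj _)

/-- **"Counterexample" to Hypothesis [Pea].**
Let `β ∈ (0,1]` and let `(a_n)` be a strictly increasing bounded sequence with
`Σ (a_{n+1} − a_n)^β = +∞`. If `h : ℝ → [0,∞]` equals `β(y − a_n)^{β−1}` on
`(a_n, (a_n+a_{n+1})/2)`, equals `β(a_{n+1} − y)^{β−1}` on `((a_n+a_{n+1})/2, a_{n+1})`,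
and vanishes elsewhere, then `∫ h(y) Γ(τ, y−θ) dy = +∞` for every `τ > 0`, `θ ∈ ℝ`. -/
theorem statement13 (β : ℝ) (hβ : β ∈ Set.Ioc (0 : ℝ) 1) (a : ℕ → ℝ)
    (ha : StrictMono a) (hbdd : ∃ M, ∀ n, a n ≤ M)
    (hdiv : (∑' n : ℕ, ENNReal.ofReal ((a (n + 1) - a n) ^ β)) = ⊤)
    (h : ℝ → ℝ≥0∞)
    (hh1 : ∀ n : ℕ, ∀ y ∈ Set.Ioo (a n) ((a n + a (n + 1)) / 2),
      h y = ENNReal.ofReal (β * (y - a n) ^ (β - 1)))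
    (hh2 : ∀ n : ℕ, ∀ y ∈ Set.Ioo ((a n + a (n + 1)) / 2) (a (n + 1)),
      h y = ENNReal.ofReal (β * (a (n + 1) - y) ^ (β - 1)))
    (hh3 : ∀ y : ℝ,
      (∀ n : ℕ, y ∉ Set.Ioo (a n) ((a n + a (n + 1)) / 2) ∧
        y ∉ Set.Ioo ((a n + a (n + 1)) / 2) (a (n + 1))) → h y = 0) :
    ∀ τ : ℝ, 0 < τ → ∀ θ : ℝ,
      (∫⁻ y : ℝ, h y * ENNReal.ofReal (gauss1 τ (y - θ))) = ⊤ :=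
  statement13_general β hβ a ha hbdd hdiv h hh1

end
end

section
/- Let τ > 0 and let d, m ≥ 1 be integers. Let g : [0,τ] × ℝ^d → ℝ^m be bounded and measurable, with x ↦ g(t,x) continuous for each t, and let u : [0,τ] × ℝ^d → ℝ^m satisfy u(s,x) = u(0,x) + ∫_0^s g(t,x) dt for every (s,x) ∈ [0,τ] × ℝ^d. Assume moreover that for each t ∈ [0,τ] the map x ↦ u(t,x) is differentiable and its Jacobian ∇_x u is continuous on [0,τ] × ℝ^d. Then for every absolutely continuous curve ξ : [0,τ] → ℝ^d and every s ∈ [0,τ], u(s, ξ(s)) = u(0, ξ(0)) + ∫_0^s g(t, ξ(t)) dt + ∫_0^s ∇_x u(t, ξ(t)) ξ'(t) dt. -/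
/-!
On the uniform grid `tᵢ = i s / n`, split each increment of `t ↦ u(t, ξ t)` as
`u(tᵢ₊₁, ξ tᵢ₊₁) - u(tᵢ, ξ tᵢ₊₁)` plus `u(tᵢ, ξ tᵢ₊₁) - u(tᵢ, ξ tᵢ)`. The first is
`∫_{tᵢ}^{tᵢ₊₁} g(r, ξ tᵢ₊₁) dr`; the second is `Lᵢ (ξ tᵢ₊₁ - ξ tᵢ) = ∫_{tᵢ}^{tᵢ₊₁} Lᵢ ξ'(r) dr`,
where `Lᵢ` is the average of `∇ₓu(tᵢ, ·)` over the segment from `ξ tᵢ` to `ξ tᵢ₊₁`. Summing gives,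
for every `n`, an exact formula of the desired shape whose integrands are evaluated at the grid
points enclosing `r`. These converge pointwise to the true integrands by continuity of `ξ`,
`g(t, ·)` and `∇ₓu`, and they are dominated by `B` and `C ‖ξ'‖`, where `C` bounds the averaged
Jacobian, a continuous function on the compact square `[0, s]²`. Dominated convergence concludes.
-/

open MeasureTheory intervalIntegral Set Filter Topology
open scoped Interval

noncomputable def gridPoint (s : ℝ) (n i : ℕ) : ℝ := i * s / n

noncomputable def gridIndex (s : ℝ) (n : ℕ) (r : ℝ) : ℕ := ⌊r * n / s⌋₊

section Grid

variable {s r : ℝ} {n i : ℕ}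

lemma gridPoint_zero : gridPoint s n 0 = 0 := by simp [gridPoint]

lemma gridPoint_self (hn : n ≠ 0) : gridPoint s n n = s := by
  simp [gridPoint, hn]

lemma gridPoint_succ : gridPoint s n (i + 1) = gridPoint s n i + s / n := by
  simp only [gridPoint]; push_cast; ring

lemma gridPoint_mem_Icc (hs : 0 ≤ s) (hi : i ≤ n) : gridPoint s n i ∈ Icc 0 s := by
  refine ⟨by unfold gridPoint; positivity, div_le_of_le_mul₀ n.cast_nonneg hs ?_⟩
  rw [mul_comm]
  exact mul_le_mul_of_nonneg_left (Nat.cast_le.2 hi) hs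

lemma gridPoint_mono (hs : 0 ≤ s) : Monotone (gridPoint s n) := fun i j hij => by
  unfold gridPoint; gcongr

lemma mem_Ico_gridPoint_iff (hs : 0 < s) (hn : 0 < n) :
    r ∈ Ico (gridPoint s n i) (gridPoint s n (i + 1)) ↔
      (i : ℝ) ≤ r * n / s ∧ r * n / s < i + 1 := by
  have hn' : (0 : ℝ) < n := Nat.cast_pos.2 hn
  simp only [gridPoint, Set.mem_Ico]
  rw [div_le_iff₀ hn', lt_div_iff₀ hn', le_div_iff₀ hs, div_lt_iff₀ hs]
  push_cast
  constructor <;> rintro ⟨h₁, h₂⟩ <;> constructor <;> linarith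

lemma gridIndex_eq_of_mem_Ico (hs : 0 < s) (hn : 0 < n)
    (hr : r ∈ Ico (gridPoint s n i) (gridPoint s n (i + 1))) : gridIndex s n r = i :=
  Nat.floor_eq_iff ((Nat.cast_nonneg i).trans ((mem_Ico_gridPoint_iff hs hn).1 hr).1) |>.2
    ((mem_Ico_gridPoint_iff hs hn).1 hr)

lemma mem_Ico_gridPoint_gridIndex (hs : 0 < s) (hn : 0 < n) (hr : 0 ≤ r) :
    r ∈ Ico (gridPoint s n (gridIndex s n r)) (gridPoint s n (gridIndex s n r + 1)) :=
  (mem_Ico_gridPoint_iff hs hn).2 ⟨Nat.floor_le (by positivity), Nat.lt_floor_add_one _⟩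

lemma gridIndex_lt (hs : 0 < s) (hn : 0 < n) (hr : r < s) : gridIndex s n r < n := by
  have hn' : (0 : ℝ) < n := Nat.cast_pos.2 hn
  rw [gridIndex, Nat.floor_lt' hn.ne', div_lt_iff₀ hs]
  nlinarith

lemma measurable_gridIndex : Measurable (gridIndex s n) :=
  (measurable_id.mul_const _ |>.div_const _).nat_floor

lemma gridPoint_gridIndex_mem (hs : 0 < s) (hn : 0 < n) (hr : r ∈ Ico 0 s) :
    (gridPoint s n (gridIndex s n r), gridPoint s n (gridIndex s n r + 1)) ∈
      Icc 0 s ×ˢ Icc 0 s :=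
  ⟨gridPoint_mem_Icc hs.le (gridIndex_lt hs hn hr.2).le,
    gridPoint_mem_Icc hs.le (gridIndex_lt hs hn hr.2)⟩

lemma tendsto_gridPoint_gridIndex (hs : 0 < s) (hr : r ∈ Ico 0 s) :
    Tendsto (fun n => (gridPoint s n (gridIndex s n r), gridPoint s n (gridIndex s n r + 1)))
      atTop (𝓝[Icc 0 s ×ˢ Icc 0 s] (r, r)) := by
  have hmesh : Tendsto (fun n : ℕ => s / n) atTop (𝓝 0) :=
    tendsto_const_div_atTop_nhds_zero_nat s
  have hIco : ∀ᶠ n in atTop,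
      r ∈ Ico (gridPoint s n (gridIndex s n r)) (gridPoint s n (gridIndex s n r + 1)) :=
    (eventually_gt_atTop 0).mono fun n hn => mem_Ico_gridPoint_gridIndex hs hn hr.1
  have hlo : Tendsto (fun n => gridPoint s n (gridIndex s n r)) atTop (𝓝 r) := by
    refine tendsto_of_tendsto_of_tendsto_of_le_of_le' (by simpa using tendsto_const_nhds.sub hmesh)
      tendsto_const_nhds ?_ (hIco.mono fun n h => h.1)
    filter_upwards [hIco] with n h
    linarith [h.2, gridPoint_succ (s := s) (n := n) (i := gridIndex s n r)]
  have hhi : Tendsto (fun n => gridPoint s n (gridIndex s n r + 1)) atTop (𝓝 r) := by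
    simpa [gridPoint_succ] using hlo.add hmesh
  exact tendsto_nhdsWithin_iff.2 ⟨hlo.prodMk_nhds hhi,
    (eventually_gt_atTop 0).mono fun n hn => gridPoint_gridIndex_mem hs hn hr⟩

variable {F : Type*} [NormedAddCommGroup F] [NormedSpace ℝ F]

lemma sum_integral_gridPoint (hs : 0 < s) (hn : 0 < n) {f : ℕ → ℝ → F}
    (hf : ∀ i < n, IntervalIntegrable (f i) volume (gridPoint s n i) (gridPoint s n (i + 1))) :
    ∑ i ∈ Finset.range n, ∫ r in gridPoint s n i..gridPoint s n (i + 1), f i r =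
      ∫ r in (0 : ℝ)..s, f (gridIndex s n r) r := by
  have hpiece : ∀ i, EqOn (fun r => f (gridIndex s n r) r) (f i)
      (uIoo (gridPoint s n i) (gridPoint s n (i + 1))) := by
    intro i r hr
    rw [uIoo_of_le (gridPoint_mono hs.le i.le_succ)] at hr
    simp only [gridIndex_eq_of_mem_Ico hs hn (Ioo_subset_Ico_self hr)]
  have := sum_integral_adjacent_intervals fun i hi => (hf i hi).congr_uIoo (hpiece i).symm
  rw [gridPoint_zero, gridPoint_self hn.ne'] at this
  rw [← this]
  exact Finset.sum_congr rfl fun i _ => (integral_congr_uIoo (hpiece i)).symm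

end Grid

lemma ae_mem_Ioo_of_mem_uIoc {a b : ℝ} (hab : a ≤ b) :
    ∀ᵐ r, r ∈ Ι a b → r ∈ Ioo a b := by
  filter_upwards [(Ioo_ae_eq_Ioc (μ := volume) (a := a) (b := b)).mem_iff] with r hr
  rw [uIoc_of_le hab]
  exact hr.2

section SegmentAverage

variable {E F : Type*} [NormedAddCommGroup E] [NormedSpace ℝ E]
  [NormedAddCommGroup F] [NormedSpace ℝ F]

noncomputable def segmentAverage (f' : E → E →L[ℝ] F) (x y : E) : E →L[ℝ] F :=
  ∫ θ in (0 : ℝ)..1, f' (x + θ • (y - x))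

@[simp]
lemma segmentAverage_self [CompleteSpace F] (f' : E → E →L[ℝ] F) (x : E) :
    segmentAverage f' x x = f' x := by
  simp [segmentAverage]

lemma sub_eq_segmentAverage_apply [CompleteSpace F] {f : E → F} {f' : E → E →L[ℝ] F}
    (hf : ∀ z, HasFDerivAt f (f' z) z) (hf' : Continuous f') (x y : E) :
    f y - f x = segmentAverage f' x y (y - x) := by
  have hcont : Continuous fun θ : ℝ => f' (x + θ • (y - x)) := by fun_prop
  have hderiv : ∀ θ ∈ uIcc (0 : ℝ) 1, HasDerivAt (fun θ : ℝ => f (x + θ • (y - x)))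
      (f' (x + θ • (y - x)) (y - x)) θ := fun θ _ =>
    (hf _).comp_hasDerivAt θ (by simpa using ((hasDerivAt_id θ).smul_const (y - x)).const_add x)
  rw [segmentAverage, ContinuousLinearMap.intervalIntegral_apply (hcont.intervalIntegrable 0 1),
    integral_eq_sub_of_hasDerivAt hderiv
      ((ContinuousLinearMap.apply ℝ F (y - x)).continuous.comp hcont |>.intervalIntegrable 0 1)]
  simp

lemma ContinuousOn.segmentAverage {φ : ℝ → E → E →L[ℝ] F} {γ : ℝ → E} {T : Set ℝ}
    (hφ : ContinuousOn (fun p : ℝ × E => φ p.1 p.2) (T ×ˢ univ)) (hγ : ContinuousOn γ T) :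
    ContinuousOn (fun p : ℝ × ℝ => segmentAverage (φ p.1) (γ p.1) (γ p.2)) (T ×ˢ T) := by
  rw [continuousOn_iff_continuous_domRestrict]
  have hγ_fst : Continuous fun q : ↥(T ×ˢ T) × ℝ => γ q.1.1.1 :=
    hγ.comp_continuous (by fun_prop) fun q => q.1.2.1
  have hγ_snd : Continuous fun q : ↥(T ×ˢ T) × ℝ => γ q.1.1.2 :=
    hγ.comp_continuous (by fun_prop) fun q => q.1.2.2
  refine continuous_parametric_intervalIntegral_of_continuous' ?_ 0 1
  exact hφ.comp_continuous (f := fun q : ↥(T ×ˢ T) × ℝ =>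
    (q.1.1.1, γ q.1.1.1 + q.2 • (γ q.1.1.2 - γ q.1.1.1)))
    ((by fun_prop : Continuous fun q : ↥(T ×ˢ T) × ℝ => q.1.1.1).prodMk
      (hγ_fst.add (continuous_snd.smul (hγ_snd.sub hγ_fst)))) fun q => ⟨q.1.2.1, mem_univ _⟩

end SegmentAverage

lemma MeasureTheory.IntegrableOn.intervalIntegrable_of_mem_Icc {E : Type*} [NormedAddCommGroup E]
    {f : ℝ → E} {μ : Measure ℝ} {a b x y : ℝ} (hf : IntegrableOn f (Icc a b) μ)
    (hx : x ∈ Icc a b) (hy : y ∈ Icc a b) : IntervalIntegrable f μ x y :=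
  (hf.mono_set (uIcc_subset_Icc hx hy)).intervalIntegrable

lemma continuousOn_of_eq_add_primitive {E : Type*} [NormedAddCommGroup E] [NormedSpace ℝ E]
    {ξ ξ' : ℝ → E} {s : ℝ} (hs : 0 ≤ s) (hξ' : IntegrableOn ξ' (Icc 0 s))
    (hξ : ∀ t ∈ Icc 0 s, ξ t = ξ 0 + ∫ r in (0 : ℝ)..t, ξ' r) :
    ContinuousOn ξ (Icc 0 s) := by
  rw [← uIcc_of_le hs] at hξ' ⊢
  exact (continuousOn_const.add (continuousOn_primitive_interval hξ')).congr
    fun t ht => hξ t (uIcc_of_le hs ▸ ht)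

lemma tendsto_integral_apply_gridPoint {E F : Type*} [NormedAddCommGroup E] [NormedSpace ℝ E]
    [NormedAddCommGroup F] [NormedSpace ℝ F] [CompleteSpace F] {Ψ : ℝ × ℝ → E →L[ℝ] F}
    {ξ' : ℝ → E} {s : ℝ} (hs : 0 < s) (hΨ : ContinuousOn Ψ (Icc 0 s ×ˢ Icc 0 s))
    (hξ' : IntegrableOn ξ' (Icc 0 s)) :
    Tendsto (fun n => ∫ r in (0 : ℝ)..s,
        Ψ (gridPoint s n (gridIndex s n r), gridPoint s n (gridIndex s n r + 1)) (ξ' r))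
      atTop (𝓝 (∫ r in (0 : ℝ)..s, Ψ (r, r) (ξ' r))) := by
  obtain ⟨C, hC⟩ := (isCompact_Icc.prod isCompact_Icc).exists_bound_of_continuousOn hΨ
  have hξ'_meas : AEStronglyMeasurable ξ' (volume.restrict (Ι 0 s)) :=
    hξ'.1.mono_set (uIoc_of_le hs.le ▸ Ioc_subset_Icc_self)
  refine tendsto_integral_filter_of_dominated_convergence (fun r => C * ‖ξ' r‖) ?_ ?_ ?_ ?_
  · refine Eventually.of_forall fun n => ?_
    have hstep : StronglyMeasurable fun r =>
        Ψ (gridPoint s n (gridIndex s n r), gridPoint s n (gridIndex s n r + 1)) :=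
      (StronglyMeasurable.of_discrete (f := fun i => Ψ (gridPoint s n i, gridPoint s n (i + 1)))
        ).comp_measurable measurable_gridIndex
    exact isBoundedBilinearMap_apply.continuous.comp_aestronglyMeasurable
      (hstep.aestronglyMeasurable.prodMk hξ'_meas)
  · filter_upwards [eventually_gt_atTop 0] with n hn
    filter_upwards [ae_mem_Ioo_of_mem_uIoc hs.le] with r hr hmem
    exact ((Ψ _).le_opNorm _).trans (mul_le_mul_of_nonneg_right
      (hC _ (gridPoint_gridIndex_mem hs hn (Ioo_subset_Ico_self (hr hmem)))) (norm_nonneg _))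
  · exact IntegrableOn.intervalIntegrable_of_mem_Icc (hξ'.norm.const_mul C) (left_mem_Icc.2 hs.le)
      (right_mem_Icc.2 hs.le)
  · filter_upwards [ae_mem_Ioo_of_mem_uIoc hs.le] with r hr hmem
    have hr' : r ∈ Ico 0 s := Ioo_subset_Ico_self (hr hmem)
    exact ((ContinuousLinearMap.apply ℝ F (ξ' r)).continuous.tendsto _).comp
      ((hΨ (r, r) ⟨Ico_subset_Icc_self hr', Ico_subset_Icc_self hr'⟩).tendsto.comp
        (tendsto_gridPoint_gridIndex hs hr'))

lemma integrableOn_Icc_of_measurable_uncurry {E F : Type*} [MeasurableSpace E]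
    [NormedAddCommGroup F] [MeasurableSpace F] [BorelSpace F] [SecondCountableTopology F]
    {g : ℝ → E → F} {s B : ℝ} (hg_meas : Measurable (Function.uncurry g))
    (hg_bdd : ∀ t ∈ Icc 0 s, ∀ x, ‖g t x‖ ≤ B) (x : E) :
    IntegrableOn (fun t => g t x) (Icc 0 s) :=
  Measure.integrableOn_of_bounded measure_Icc_lt_top.ne
    (hg_meas.comp (measurable_id.prodMk measurable_const)).aestronglyMeasurable
    ((ae_restrict_iff' measurableSet_Icc).2 (Eventually.of_forall fun t ht => hg_bdd t ht x))

lemma tendsto_integral_gridPoint_succ {E F : Type*} [TopologicalSpace E] [MeasurableSpace E]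
    [NormedAddCommGroup F] [NormedSpace ℝ F] [MeasurableSpace F] [BorelSpace F]
    [SecondCountableTopology F] {g : ℝ → E → F} {ξ : ℝ → E} {s B : ℝ} (hs : 0 < s)
    (hg_meas : Measurable (Function.uncurry g))
    (hg_bdd : ∀ t ∈ Icc 0 s, ∀ x, ‖g t x‖ ≤ B)
    (hg_cont : ∀ t ∈ Icc 0 s, Continuous (g t)) (hξ : ContinuousOn ξ (Icc 0 s)) :
    Tendsto (fun n => ∫ r in (0 : ℝ)..s, g r (ξ (gridPoint s n (gridIndex s n r + 1))))
      atTop (𝓝 (∫ r in (0 : ℝ)..s, g r (ξ r))) := by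
  refine tendsto_integral_filter_of_dominated_convergence (fun _ => B) ?_ ?_
    intervalIntegrable_const ?_
  · exact Eventually.of_forall fun n => (hg_meas.comp (measurable_id.prodMk
      ((measurable_from_nat (f := fun i => ξ (gridPoint s n (i + 1)))).comp
        measurable_gridIndex))).aestronglyMeasurable
  · refine Eventually.of_forall fun n => ae_of_all _ fun r hr => hg_bdd r ?_ _
    exact Ioc_subset_Icc_self (uIoc_of_le hs.le ▸ hr)
  · filter_upwards [ae_mem_Ioo_of_mem_uIoc hs.le] with r hr hmem
    have hr' : r ∈ Ico 0 s := Ioo_subset_Ico_self (hr hmem)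
    have hξ_snd :
        ContinuousWithinAt (fun p : ℝ × ℝ => ξ p.2) (Icc 0 s ×ˢ Icc 0 s) (r, r) :=
      (hξ r (Ico_subset_Icc_self hr')).comp continuousWithinAt_snd fun _ hp => hp.2
    exact ((hg_cont r (Ico_subset_Icc_self hr')).tendsto _).comp
      (hξ_snd.tendsto.comp (tendsto_gridPoint_gridIndex hs hr'))

section ChainRule

variable {E F : Type*} [NormedAddCommGroup E] [NormedSpace ℝ E] [CompleteSpace E]
  [MeasurableSpace E] [NormedAddCommGroup F] [NormedSpace ℝ F] [CompleteSpace F]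
  [MeasurableSpace F] [BorelSpace F] [SecondCountableTopology F]
  {g u : ℝ → E → F} {Du : ℝ → E → E →L[ℝ] F} {ξ ξ' : ℝ → E} {s B : ℝ}

lemma sub_eq_integral_add_integral_segmentAverage (hg_meas : Measurable (Function.uncurry g))
    (hg_bdd : ∀ t ∈ Icc 0 s, ∀ x, ‖g t x‖ ≤ B)
    (hu : ∀ t ∈ Icc 0 s, ∀ x, u t x = u 0 x + ∫ r in (0 : ℝ)..t, g r x)
    (hDu : ∀ t ∈ Icc 0 s, ∀ x, HasFDerivAt (u t) (Du t x) x)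
    (hDu_cont : ContinuousOn (fun p : ℝ × E => Du p.1 p.2) (Icc 0 s ×ˢ univ))
    (hξ' : IntegrableOn ξ' (Icc 0 s))
    (hξ : ∀ t ∈ Icc 0 s, ξ t = ξ 0 + ∫ r in (0 : ℝ)..t, ξ' r)
    {a b : ℝ} (ha : a ∈ Icc 0 s) (hb : b ∈ Icc 0 s) :
    u b (ξ b) - u a (ξ a) = (∫ r in a..b, g r (ξ b))
      + ∫ r in a..b, segmentAverage (Du a) (ξ a) (ξ b) (ξ' r) := by
  have h0 : (0 : ℝ) ∈ Icc 0 s := left_mem_Icc.2 (ha.1.trans ha.2)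
  have hg_int := integrableOn_Icc_of_measurable_uncurry hg_meas hg_bdd (ξ b)
  have htime : u b (ξ b) - u a (ξ b) = ∫ r in a..b, g r (ξ b) := by
    rw [hu b hb, hu a ha, add_sub_add_left_eq_sub, integral_interval_sub_left
      (hg_int.intervalIntegrable_of_mem_Icc h0 hb) (hg_int.intervalIntegrable_of_mem_Icc h0 ha)]
  have hspace : u a (ξ b) - u a (ξ a) = segmentAverage (Du a) (ξ a) (ξ b) (ξ b - ξ a) :=
    sub_eq_segmentAverage_apply (hDu a ha)
      (hDu_cont.comp_continuous (continuous_const.prodMk continuous_id)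
        fun x => ⟨ha, mem_univ x⟩)
      (ξ a) (ξ b)
  have hcurve : ξ b - ξ a = ∫ r in a..b, ξ' r := by
    rw [hξ b hb, hξ a ha, add_sub_add_left_eq_sub, integral_interval_sub_left
      (hξ'.intervalIntegrable_of_mem_Icc h0 hb) (hξ'.intervalIntegrable_of_mem_Icc h0 ha)]
  rw [← sub_add_sub_cancel _ (u a (ξ b)), htime, hspace, hcurve,
    ContinuousLinearMap.intervalIntegral_comp_comm _ (hξ'.intervalIntegrable_of_mem_Icc ha hb)]

lemma sub_eq_integral_add_integral_gridPoint (hs : 0 < s) {n : ℕ} (hn : 0 < n)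
    (hg_meas : Measurable (Function.uncurry g))
    (hg_bdd : ∀ t ∈ Icc 0 s, ∀ x, ‖g t x‖ ≤ B)
    (hu : ∀ t ∈ Icc 0 s, ∀ x, u t x = u 0 x + ∫ r in (0 : ℝ)..t, g r x)
    (hDu : ∀ t ∈ Icc 0 s, ∀ x, HasFDerivAt (u t) (Du t x) x)
    (hDu_cont : ContinuousOn (fun p : ℝ × E => Du p.1 p.2) (Icc 0 s ×ˢ univ))
    (hξ' : IntegrableOn ξ' (Icc 0 s))
    (hξ : ∀ t ∈ Icc 0 s, ξ t = ξ 0 + ∫ r in (0 : ℝ)..t, ξ' r) :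
    u s (ξ s) - u 0 (ξ 0) =
      (∫ r in (0 : ℝ)..s, g r (ξ (gridPoint s n (gridIndex s n r + 1)))) +
        ∫ r in (0 : ℝ)..s, segmentAverage (Du (gridPoint s n (gridIndex s n r)))
          (ξ (gridPoint s n (gridIndex s n r))) (ξ (gridPoint s n (gridIndex s n r + 1)))
          (ξ' r) := by
  set t := gridPoint s n
  have ht : ∀ i ≤ n, t i ∈ Icc 0 s := fun i hi => gridPoint_mem_Icc hs.le hi
  calc u s (ξ s) - u 0 (ξ 0)
        = ∑ i ∈ Finset.range n, (u (t (i + 1)) (ξ (t (i + 1))) - u (t i) (ξ (t i))) := by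
        rw [Finset.sum_range_sub (fun i => u (t i) (ξ (t i))), show t 0 = 0 from gridPoint_zero,
          show t n = s from gridPoint_self hn.ne']
    _ = ∑ i ∈ Finset.range n, ((∫ r in t i..t (i + 1), g r (ξ (t (i + 1))))
          + ∫ r in t i..t (i + 1), segmentAverage (Du (t i)) (ξ (t i)) (ξ (t (i + 1))) (ξ' r)) :=
        Finset.sum_congr rfl fun i hi =>
          sub_eq_integral_add_integral_segmentAverage hg_meas hg_bdd hu hDu hDu_cont hξ' hξ
            (ht i (Finset.mem_range.1 hi).le) (ht (i + 1) (Finset.mem_range.1 hi))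
    _ = _ := by
        rw [Finset.sum_add_distrib]
        congr 1 <;> refine sum_integral_gridPoint hs hn fun i hi => ?_
        · exact (integrableOn_Icc_of_measurable_uncurry hg_meas hg_bdd _
            ).intervalIntegrable_of_mem_Icc (ht i hi.le) (ht (i + 1) hi)
        · exact IntegrableOn.intervalIntegrable_of_mem_Icc
            (ContinuousLinearMap.integrable_comp _ hξ') (ht i hi.le) (ht (i + 1) hi)

theorem eq_add_integral_add_integral_fderiv (hs : 0 < s)
    (hg_meas : Measurable (Function.uncurry g))
    (hg_bdd : ∀ t ∈ Icc 0 s, ∀ x, ‖g t x‖ ≤ B)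
    (hg_cont : ∀ t ∈ Icc 0 s, Continuous (g t))
    (hu : ∀ t ∈ Icc 0 s, ∀ x, u t x = u 0 x + ∫ r in (0 : ℝ)..t, g r x)
    (hDu : ∀ t ∈ Icc 0 s, ∀ x, HasFDerivAt (u t) (Du t x) x)
    (hDu_cont : ContinuousOn (fun p : ℝ × E => Du p.1 p.2) (Icc 0 s ×ˢ univ))
    (hξ' : IntegrableOn ξ' (Icc 0 s))
    (hξ : ∀ t ∈ Icc 0 s, ξ t = ξ 0 + ∫ r in (0 : ℝ)..t, ξ' r) :
    u s (ξ s) = u 0 (ξ 0) + (∫ r in (0 : ℝ)..s, g r (ξ r)) +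
      ∫ r in (0 : ℝ)..s, Du r (ξ r) (ξ' r) := by
  have hξ_cont := continuousOn_of_eq_add_primitive hs.le hξ' hξ
  have hlim := (tendsto_integral_gridPoint_succ hs hg_meas hg_bdd hg_cont hξ_cont).add
    (tendsto_integral_apply_gridPoint hs (hDu_cont.segmentAverage hξ_cont) hξ')
  simp only [segmentAverage_self] at hlim
  have hdiscrete : ∀ᶠ n in atTop, u s (ξ s) - u 0 (ξ 0) = _ :=
    (eventually_gt_atTop 0).mono fun n hn =>
      sub_eq_integral_add_integral_gridPoint hs hn hg_meas hg_bdd hu hDu hDu_cont hξ' hξ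
  have hdiff := tendsto_nhds_unique (tendsto_const_nhds.congr' hdiscrete) hlim
  rw [add_assoc, ← hdiff, add_sub_cancel]

end ChainRule

theorem statement16_general (τ : ℝ) (d m : ℕ)
    (g u : ℝ → EuclideanSpace ℝ (Fin d) → EuclideanSpace ℝ (Fin m))
    (Du : ℝ → EuclideanSpace ℝ (Fin d) →
      (EuclideanSpace ℝ (Fin d) →L[ℝ] EuclideanSpace ℝ (Fin m)))
    (hgmeas : Measurable (Function.uncurry g))
    (hgbdd : ∃ B : ℝ, ∀ t ∈ Set.Icc (0 : ℝ) τ, ∀ x, ‖g t x‖ ≤ B)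
    (hgcont : ∀ t ∈ Set.Icc (0 : ℝ) τ, Continuous (g t))
    (hu : ∀ s ∈ Set.Icc (0 : ℝ) τ, ∀ x, u s x = u 0 x + ∫ t in (0 : ℝ)..s, g t x)
    (hDu : ∀ t ∈ Set.Icc (0 : ℝ) τ, ∀ x, HasFDerivAt (u t) (Du t x) x)
    (hDucont : ContinuousOn (fun p : ℝ × EuclideanSpace ℝ (Fin d) => Du p.1 p.2)
      (Set.Icc 0 τ ×ˢ Set.univ))
    (ξ ξ' : ℝ → EuclideanSpace ℝ (Fin d))
    (hξ'int : IntegrableOn ξ' (Set.Icc 0 τ))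
    (hξ : ∀ s ∈ Set.Icc (0 : ℝ) τ, ξ s = ξ 0 + ∫ t in (0 : ℝ)..s, ξ' t) :
    ∀ s ∈ Set.Icc (0 : ℝ) τ,
      u s (ξ s) = u 0 (ξ 0) + (∫ t in (0 : ℝ)..s, g t (ξ t))
        + ∫ t in (0 : ℝ)..s, Du t (ξ t) (ξ' t) := by
  intro s hs
  obtain rfl | hs_pos := hs.1.eq_or_lt
  · simp
  have hsub : Icc 0 s ⊆ Icc 0 τ := Icc_subset_Icc_right hs.2
  obtain ⟨B, hB⟩ := hgbdd
  exact eq_add_integral_add_integral_fderiv hs_pos hgmeas (fun t ht => hB t (hsub ht))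
    (fun t ht => hgcont t (hsub ht)) (fun t ht => hu t (hsub ht)) (fun t ht => hDu t (hsub ht))
    (hDucont.mono (prod_mono hsub subset_rfl)) (hξ'int.mono_set hsub) (fun t ht => hξ t (hsub ht))

/-- **Deterministic Itô (chain rule) formula.**
Let `u(s,x) = u(0,x) + ∫_0^s g(t,x) dt` with `g` bounded, measurable and continuous in
`x`, and suppose `x ↦ u(t,x)` is differentiable with Jacobian `Du` continuous on
`[0,τ] × ℝ^d`. Then along every absolutely continuous curve `ξ` (written as
`ξ(s) = ξ(0) + ∫_0^s ξ'`, with `ξ'` integrable),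
`u(s,ξ(s)) = u(0,ξ(0)) + ∫_0^s g(t,ξ(t)) dt + ∫_0^s Du(t,ξ(t)) ξ'(t) dt`. -/
theorem statement16 (τ : ℝ) (hτ : 0 < τ) (d m : ℕ) (hd : 1 ≤ d) (hm : 1 ≤ m)
    (g u : ℝ → EuclideanSpace ℝ (Fin d) → EuclideanSpace ℝ (Fin m))
    (Du : ℝ → EuclideanSpace ℝ (Fin d) →
      (EuclideanSpace ℝ (Fin d) →L[ℝ] EuclideanSpace ℝ (Fin m)))
    (hgmeas : Measurable (Function.uncurry g))
    (hgbdd : ∃ B : ℝ, ∀ t ∈ Set.Icc (0 : ℝ) τ, ∀ x, ‖g t x‖ ≤ B)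
    (hgcont : ∀ t ∈ Set.Icc (0 : ℝ) τ, Continuous (g t))
    (hu : ∀ s ∈ Set.Icc (0 : ℝ) τ, ∀ x, u s x = u 0 x + ∫ t in (0 : ℝ)..s, g t x)
    (hDu : ∀ t ∈ Set.Icc (0 : ℝ) τ, ∀ x, HasFDerivAt (u t) (Du t x) x)
    (hDucont : ContinuousOn (fun p : ℝ × EuclideanSpace ℝ (Fin d) => Du p.1 p.2)
      (Set.Icc 0 τ ×ˢ Set.univ))
    (ξ ξ' : ℝ → EuclideanSpace ℝ (Fin d))
    (hξ'int : IntegrableOn ξ' (Set.Icc 0 τ))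
    (hξ : ∀ s ∈ Set.Icc (0 : ℝ) τ, ξ s = ξ 0 + ∫ t in (0 : ℝ)..s, ξ' t) :
    ∀ s ∈ Set.Icc (0 : ℝ) τ,
      u s (ξ s) = u 0 (ξ 0) + (∫ t in (0 : ℝ)..s, g t (ξ t))
        + ∫ t in (0 : ℝ)..s, Du t (ξ t) (ξ' t) :=
  statement16_general τ d m g u Du hgmeas hgbdd hgcont hu hDu hDucont ξ ξ' hξ'int hξ
end
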